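/- arXiv:1301.1182 — 3 statements merged into one kernel-verified Lean document; each statement's English description precedes it below -/
import Mathlib

section
/- Let A ∈ B+(X) and let ℓ ≥ 1 be an integer. Then for all x ∈ X, E_x[(τ_A+1)^ℓ 1_{τ_A<∞}] = ∫_{A^c} E_y[(τ_A+1)^ℓ 1_{τ_A<∞}] P(x,dy) + P(x,A) + Σ_{k=0}^{ℓ−1} C(ℓ,k) E_x[τ_A^k 1_{τ_A<∞}], where C(ℓ,k) is the binomial coefficient. Moreover, the function x ↦ E_x[(σ_A+1)^ℓ 1_{σ_A<∞}] is the minimal nonnegative solution of the system: g(x) = ∫_{A^c} g(y) P(x,dy) + P(x,A) + Σ_{k=0}^{ℓ−1} C(ℓ,k) E_x[τ_A^k 1_{τ_A<∞}] for x ∈ A^c, and g(x) = 1 for x ∈ A; that is, it satisfies the system and every nonnegative solution of the system dominates it pointwise. -/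
open MeasureTheory ProbabilityTheory
open scoped ENNReal NNReal Classical

namespace MarkovTransience

variable {X : Type*} [MeasurableSpace X]

/-- `iterP P n x A` is the `n`-step transition probability `P^n(x, A)`. -/
noncomputable def iterP (P : Kernel X X) : ℕ → X → Set X → ℝ≥0∞
  | 0 => fun x A => A.indicator (fun _ => 1) x
  | n + 1 => fun x A => ∫⁻ y, iterP P n y A ∂(P x)

/-- `retF P A n x` is `F^n(x, A) = P_x(τ_A = n)`, the probability that the first
return to `A` happens at time `n`. -/
noncomputable def retF (P : Kernel X X) (A : Set X) : ℕ → X → ℝ≥0∞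
  | 0 => fun _ => 0
  | 1 => fun x => P x A
  | n + 2 => fun x => ∫⁻ y in Aᶜ, retF P A (n + 1) y ∂(P x)

/-- `retL P A x = L(x, A) = P_x(τ_A < ∞)`. -/
noncomputable def retL (P : Kernel X X) (A : Set X) (x : X) : ℝ≥0∞ :=
  ∑' n, retF P A n x

/-- `retE P A r x = E_x[r(τ_A) 1_{τ_A < ∞}]`. -/
noncomputable def retE (P : Kernel X X) (A : Set X) (r : ℕ → ℝ≥0∞) (x : X) : ℝ≥0∞ :=
  ∑' n, r n * retF P A n x

/-- `hitE P A r x = E_x[r(σ_A) 1_{σ_A < ∞}]`, `σ_A` the first hitting time. -/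
noncomputable def hitE (P : Kernel X X) (A : Set X) (r : ℕ → ℝ≥0∞) (x : X) : ℝ≥0∞ :=
  if x ∈ A then r 0 else retE P A r x

/-- `act P W x = PW(x) = ∫ W(y) P(x, dy)`. -/
noncomputable def act (P : Kernel X X) (W : X → ℝ≥0∞) (x : X) : ℝ≥0∞ :=
  ∫⁻ y, W y ∂(P x)

/-- `ψ`-irreducibility: `ψ` is a nontrivial σ-finite measure such that every set of
positive `ψ`-measure is reached with positive probability from every starting point. -/
def IsIrreducibility (P : Kernel X X) (ψ : Measure X) : Prop :=
  ψ ≠ 0 ∧ SigmaFinite ψ ∧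
    ∀ A : Set X, MeasurableSet A → 0 < ψ A → ∀ x, 0 < ∑' n, iterP P (n + 1) x A

/-- `ψ` is a maximal irreducibility measure for `P`. -/
def IsMaxIrreducibility (P : Kernel X X) (ψ : Measure X) : Prop :=
  IsIrreducibility P ψ ∧ ∀ ψ' : Measure X, IsIrreducibility P ψ' → ψ' ≪ ψ

/-- `A ∈ B⁺(X)`: a measurable set of positive `ψ`-measure. -/
def InBPlus (ψ : Measure X) (A : Set X) : Prop :=
  MeasurableSet A ∧ 0 < ψ A

/-- A petite set. -/
def PetiteSet (P : Kernel X X) (A : Set X) : Prop :=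
  ∃ (a : ℕ → ℝ≥0∞) (ν : Measure X), (∑' n, a n) = 1 ∧ ν ≠ 0 ∧
    ∀ x ∈ A, ∀ B : Set X, MeasurableSet B → ν B ≤ ∑' n, a n * iterP P (n + 1) x B

/-- The chain is transient. -/
def Transient (P : Kernel X X) (ψ : Measure X) : Prop :=
  IsMaxIrreducibility P ψ ∧
    ∃ A : ℕ → Set X, (⋃ i, A i) = Set.univ ∧
      ∀ i, InBPlus ψ (A i) ∧ (⨆ x ∈ A i, ∑' n, iterP P (n + 1) x (A i)) < ⊤

/-- A uniformly geometric transient set. -/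
def UnifGeomTransientSet (P : Kernel X X) (A : Set X) : Prop :=
  ∃ κ : ℝ≥0, 1 < κ ∧ (⨆ x ∈ A, ∑' n, (κ : ℝ≥0∞) ^ (n + 1) * iterP P (n + 1) x A) < ⊤

/-- The chain is geometrically transient. -/
def GeomTransient (P : Kernel X X) (ψ : Measure X) : Prop :=
  IsMaxIrreducibility P ψ ∧
    ∃ (D : Set X) (A : ℕ → Set X), ψ D = 0 ∧ D ∪ (⋃ i, A i) = Set.univ ∧
      ∀ i, InBPlus ψ (A i) ∧ UnifGeomTransientSet P (A i)

/-- A uniformly `ℓ`-transient set. -/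
def UnifAlgTransientSet (P : Kernel X X) (ℓ : ℕ) (A : Set X) : Prop :=
  (⨆ x ∈ A, ∑' n, ((n + 1 : ℕ) : ℝ≥0∞) ^ ℓ * iterP P (n + 1) x A) < ⊤

/-- The chain is algebraically (`ℓ`-)transient. -/
def AlgTransient (P : Kernel X X) (ψ : Measure X) (ℓ : ℕ) : Prop :=
  IsMaxIrreducibility P ψ ∧
    ∃ (D : Set X) (A : ℕ → Set X), ψ D = 0 ∧ D ∪ (⋃ i, A i) = Set.univ ∧
      ∀ i, InBPlus ψ (A i) ∧ UnifAlgTransientSet P ℓ (A i)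

/-- `lifeDist P x n = P_x(τ = n)` where `τ = sup{n : Φ_n ∈ X}` is the lifetime of the
(sub-stochastic) chain, so that `P_x(τ = n) = P^n(x, X) - P^{n+1}(x, X)`. -/
noncomputable def lifeDist (P : Kernel X X) (x : X) (n : ℕ) : ℝ≥0∞ :=
  iterP P n x Set.univ - iterP P (n + 1) x Set.univ

/-- `lifeE P r x = E_x[r(τ)]` for the lifetime `τ` (on the event `τ < ∞`). -/
noncomputable def lifeE (P : Kernel X X) (r : ℕ → ℝ≥0∞) (x : X) : ℝ≥0∞ :=
  ∑' n, r n * lifeDist P x n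

/-- The family `Λ` of normalized increasing submultiplicative rate functions. -/
def InLambda (r : ℕ → ℝ≥0) : Prop :=
  Monotone r ∧ r 0 = 1 ∧ (∀ n, 1 ≤ r n) ∧ ∀ m n, r (m + n) ≤ r m * r n

/-! The identity is the first-step decomposition
`E_x[w(τ_A)] = w(1) P(x, A) + ∫_{Aᶜ} E_y[w(τ_A + 1)] P(x, dy)` for the weight `w(n) = n^ℓ`,
combined with the binomial expansion `(n + 1)^ℓ = n^ℓ + Σ_{k<ℓ} C(ℓ,k) n^k`. For minimality the
same two facts show, by induction on `N`, that the moment with the truncated weight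
`(n + 1)^ℓ 1_{n < N}` is dominated by every nonnegative supersolution; then let `N → ∞`. -/

theorem add_one_pow_eq_pow_add_sum {R : Type*} [CommSemiring R] (x : R) (ℓ : ℕ) :
    (x + 1) ^ ℓ = x ^ ℓ + ∑ k ∈ Finset.range ℓ, (ℓ.choose k : R) * x ^ k := by
  rw [add_pow, Finset.sum_range_succ, Nat.choose_self, add_comm]
  simp [mul_comm]

section ReturnTimeMoments

variable (P : Kernel X X) {A : Set X}

lemma measurable_retF (hA : MeasurableSet A) : ∀ n, Measurable (retF P A n)
  | 0 => measurable_const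
  | 1 => P.measurable_coe hA
  | n + 2 => by
    have h := (Measure.measurable_lintegral
      ((measurable_retF hA (n + 1)).indicator hA.compl)).comp P.measurable
    simp only [Function.comp_def, lintegral_indicator hA.compl] at h
    exact h

lemma retE_add (u v : ℕ → ℝ≥0∞) (x : X) :
    retE P A (u + v) x = retE P A u x + retE P A v x := by
  simp only [retE, Pi.add_apply, add_mul, ENNReal.tsum_add]

lemma retE_finsetSum {ι : Type*} (s : Finset ι) (u : ι → ℕ → ℝ≥0∞) (x : X) :
    retE P A (∑ i ∈ s, u i) x = ∑ i ∈ s, retE P A (u i) x := by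
  simp only [retE, Finset.sum_apply, Finset.sum_mul]
  exact Summable.tsum_finsetSum fun _ _ => ENNReal.summable

lemma retE_const_mul (c : ℝ≥0∞) (u : ℕ → ℝ≥0∞) (x : X) :
    retE P A (fun n => c * u n) x = c * retE P A u x := by
  simp only [retE, mul_assoc, ENNReal.tsum_mul_left]

lemma retE_mono {u v : ℕ → ℝ≥0∞} (huv : u ≤ v) (x : X) : retE P A u x ≤ retE P A v x :=
  ENNReal.tsum_le_tsum fun n => by gcongr; exact huv n

lemma retE_add_sum_choose_mul_pow (ℓ : ℕ) (v : ℕ → ℝ≥0∞) (x : X) :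
    retE P A (fun n => v n + ∑ k ∈ Finset.range ℓ, (ℓ.choose k : ℝ≥0∞) * (n : ℝ≥0∞) ^ k) x
      = retE P A v x
        + ∑ k ∈ Finset.range ℓ, (ℓ.choose k : ℝ≥0∞) * retE P A (fun n => (n : ℝ≥0∞) ^ k) x := by
  have hweight : (fun n => v n + ∑ k ∈ Finset.range ℓ, (ℓ.choose k : ℝ≥0∞) * (n : ℝ≥0∞) ^ k)
      = v + ∑ k ∈ Finset.range ℓ, fun n : ℕ => (ℓ.choose k : ℝ≥0∞) * (n : ℝ≥0∞) ^ k := by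
    funext n
    simp only [Pi.add_apply, Finset.sum_apply]
  rw [hweight, retE_add, retE_finsetSum]
  simp only [retE_const_mul P _ fun n => (n : ℝ≥0∞) ^ _]

lemma retE_eq_tsum_succ (w : ℕ → ℝ≥0∞) (x : X) :
    retE P A w x = ∑' n, w (n + 1) * retF P A (n + 1) x := by
  rw [retE, tsum_eq_zero_add' ENNReal.summable, show retF P A 0 x = 0 from rfl, mul_zero,
    zero_add]

theorem retE_eq_mul_add_setLIntegral (hA : MeasurableSet A) (w : ℕ → ℝ≥0∞) (x : X) :
    retE P A w x = w 1 * P x A + ∫⁻ y in Aᶜ, retE P A (fun n => w (n + 1)) y ∂(P x) := by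
  simp only [retE_eq_tsum_succ P (fun n => w (n + 1))]
  rw [retE_eq_tsum_succ, tsum_eq_zero_add' ENNReal.summable,
    lintegral_tsum fun n => ((measurable_retF P hA (n + 1)).const_mul _).aemeasurable]
  congr 1
  refine tsum_congr fun n => ?_
  rw [lintegral_const_mul _ (measurable_retF P hA (n + 1))]
  rfl

theorem retE_succ_pow_eq_setLIntegral_add (hA : MeasurableSet A) (ℓ : ℕ) (x : X) :
    retE P A (fun n => ((n + 1 : ℕ) : ℝ≥0∞) ^ ℓ) x
      = (∫⁻ y in Aᶜ, retE P A (fun n => ((n + 1 : ℕ) : ℝ≥0∞) ^ ℓ) y ∂(P x)) + P x A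
        + ∑ k ∈ Finset.range ℓ, (ℓ.choose k : ℝ≥0∞) * retE P A (fun n => (n : ℝ≥0∞) ^ k) x := by
  have hbinomial : retE P A (fun n => ((n + 1 : ℕ) : ℝ≥0∞) ^ ℓ) x
      = retE P A (fun n => (n : ℝ≥0∞) ^ ℓ) x
        + ∑ k ∈ Finset.range ℓ, (ℓ.choose k : ℝ≥0∞) * retE P A (fun n => (n : ℝ≥0∞) ^ k) x := by
    simp only [← retE_add_sum_choose_mul_pow, Nat.cast_succ, add_one_pow_eq_pow_add_sum]
  rw [hbinomial, retE_eq_mul_add_setLIntegral P hA (fun n => (n : ℝ≥0∞) ^ ℓ), Nat.cast_one,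
    one_pow, one_mul, add_comm (P x A)]

lemma retE_truncated_succ_pow_le (hA : MeasurableSet A) (ℓ : ℕ) {g : X → ℝ≥0∞}
    (hg : ∀ x ∉ A, (∫⁻ y in Aᶜ, g y ∂(P x)) + P x A
        + ∑ k ∈ Finset.range ℓ, (ℓ.choose k : ℝ≥0∞) * retE P A (fun n => (n : ℝ≥0∞) ^ k) x
        ≤ g x) (N : ℕ) :
    ∀ x ∉ A, retE P A (fun n => if n < N then ((n + 1 : ℕ) : ℝ≥0∞) ^ ℓ else 0) x ≤ g x := by
  induction N with
  | zero => simp [retE]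
  | succ N ih =>
    intro x hx
    set V : ℕ → ℝ≥0∞ := fun n => if n ≤ N then (n : ℝ≥0∞) ^ ℓ else 0
    have hweight : (fun n => if n < N + 1 then ((n + 1 : ℕ) : ℝ≥0∞) ^ ℓ else 0)
        ≤ fun n => V n + ∑ k ∈ Finset.range ℓ, (ℓ.choose k : ℝ≥0∞) * (n : ℝ≥0∞) ^ k := by
      intro n
      by_cases hn : n ≤ N
      · simp [V, hn, Nat.lt_succ_of_le hn, add_one_pow_eq_pow_add_sum]
      · simp [V, hn, Nat.lt_succ_iff.not.mpr hn]
    have hshift :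
        (fun n => V (n + 1)) = fun n => if n < N then ((n + 1 : ℕ) : ℝ≥0∞) ^ ℓ else 0 := by
      funext n
      simp [V]
    calc retE P A (fun n => if n < N + 1 then ((n + 1 : ℕ) : ℝ≥0∞) ^ ℓ else 0) x
        ≤ retE P A V x + ∑ k ∈ Finset.range ℓ,
            (ℓ.choose k : ℝ≥0∞) * retE P A (fun n => (n : ℝ≥0∞) ^ k) x := by
          rw [← retE_add_sum_choose_mul_pow]
          exact retE_mono P hweight x
      _ ≤ (∫⁻ y in Aᶜ, g y ∂(P x)) + P x A + ∑ k ∈ Finset.range ℓ,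
            (ℓ.choose k : ℝ≥0∞) * retE P A (fun n => (n : ℝ≥0∞) ^ k) x := by
          rw [retE_eq_mul_add_setLIntegral P hA, hshift, add_comm (_ * _)]
          refine add_le_add (add_le_add ?_ ?_) le_rfl
          · exact setLIntegral_mono' hA.compl ih
          · exact mul_le_of_le_one_left' (by simp only [V]; split_ifs <;> simp)
      _ ≤ g x := hg x hx

theorem retE_succ_pow_le_of_supersolution (hA : MeasurableSet A) (ℓ : ℕ) {g : X → ℝ≥0∞}
    (hg : ∀ x ∉ A, (∫⁻ y in Aᶜ, g y ∂(P x)) + P x A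
        + ∑ k ∈ Finset.range ℓ, (ℓ.choose k : ℝ≥0∞) * retE P A (fun n => (n : ℝ≥0∞) ^ k) x
        ≤ g x) {x : X} (hx : x ∉ A) :
    retE P A (fun n => ((n + 1 : ℕ) : ℝ≥0∞) ^ ℓ) x ≤ g x := by
  refine ENNReal.tsum_le_of_sum_range_le fun N => ?_
  calc ∑ n ∈ Finset.range N, ((n + 1 : ℕ) : ℝ≥0∞) ^ ℓ * retF P A n x
      = ∑ n ∈ Finset.range N,
          (if n < N then ((n + 1 : ℕ) : ℝ≥0∞) ^ ℓ else 0) * retF P A n x :=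
        Finset.sum_congr rfl fun n hn => by rw [if_pos (Finset.mem_range.mp hn)]
    _ ≤ retE P A (fun n => if n < N then ((n + 1 : ℕ) : ℝ≥0∞) ^ ℓ else 0) x :=
        ENNReal.sum_le_tsum _
    _ ≤ g x := retE_truncated_succ_pow_le P hA ℓ hg N x hx

end ReturnTimeMoments

theorem minimal_solution_polynomial_moment_general
    {X : Type*} [MeasurableSpace X]
    (P : Kernel X X) (ψ : Measure X)
    (A : Set X) (hA : InBPlus ψ A)
    (ℓ : ℕ) :
    (∀ x, retE P A (fun n => ((n + 1 : ℕ) : ℝ≥0∞) ^ ℓ) x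
        = (∫⁻ y in Aᶜ, retE P A (fun n => ((n + 1 : ℕ) : ℝ≥0∞) ^ ℓ) y ∂(P x))
          + P x A
          + ∑ k ∈ Finset.range ℓ, (ℓ.choose k : ℝ≥0∞) * retE P A (fun n => (n : ℝ≥0∞) ^ k) x) ∧
    ((∀ x ∉ A, hitE P A (fun n => ((n + 1 : ℕ) : ℝ≥0∞) ^ ℓ) x
        = (∫⁻ y in Aᶜ, hitE P A (fun n => ((n + 1 : ℕ) : ℝ≥0∞) ^ ℓ) y ∂(P x))
          + P x A
          + ∑ k ∈ Finset.range ℓ, (ℓ.choose k : ℝ≥0∞) * retE P A (fun n => (n : ℝ≥0∞) ^ k) x) ∧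
      (∀ x ∈ A, hitE P A (fun n => ((n + 1 : ℕ) : ℝ≥0∞) ^ ℓ) x = 1)) ∧
    (∀ g : X → ℝ≥0∞, Measurable g →
      ((∀ x ∉ A, g x = (∫⁻ y in Aᶜ, g y ∂(P x)) + P x A
          + ∑ k ∈ Finset.range ℓ, (ℓ.choose k : ℝ≥0∞) * retE P A (fun n => (n : ℝ≥0∞) ^ k) x) ∧
        (∀ x ∈ A, g x = 1)) →
      ∀ x, hitE P A (fun n => ((n + 1 : ℕ) : ℝ≥0∞) ^ ℓ) x ≤ g x) := by
  have hAm : MeasurableSet A := hA.1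
  have hitE_of_mem : ∀ x ∈ A, hitE P A (fun n => ((n + 1 : ℕ) : ℝ≥0∞) ^ ℓ) x = 1 := by
    intro x hx
    simp [hitE, hx]
  refine ⟨retE_succ_pow_eq_setLIntegral_add P hAm ℓ, ⟨fun x hx => ?_, hitE_of_mem⟩,
    fun g _ hg x => ?_⟩
  · have hitE_compl : ∫⁻ y in Aᶜ, hitE P A (fun n => ((n + 1 : ℕ) : ℝ≥0∞) ^ ℓ) y ∂(P x)
        = ∫⁻ y in Aᶜ, retE P A (fun n => ((n + 1 : ℕ) : ℝ≥0∞) ^ ℓ) y ∂(P x) :=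
      setLIntegral_congr_fun hAm.compl fun y hy => if_neg hy
    rw [hitE, if_neg hx, hitE_compl]
    exact retE_succ_pow_eq_setLIntegral_add P hAm ℓ x
  · by_cases hx : x ∈ A
    · rw [hitE_of_mem x hx, hg.2 x hx]
    · rw [hitE, if_neg hx]
      exact retE_succ_pow_le_of_supersolution P hAm ℓ (fun y hy => (hg.1 y hy).ge) hx

theorem minimal_solution_polynomial_moment
    {X : Type*} [MeasurableSpace X] [MeasurableSpace.CountablyGenerated X]
    (P : Kernel X X) (hP : ∀ x, P x Set.univ ≤ 1) (ψ : Measure X)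
    (hψ : IsMaxIrreducibility P ψ) (A : Set X) (hA : InBPlus ψ A)
    (ℓ : ℕ) (hℓ : 1 ≤ ℓ) :
    (∀ x, retE P A (fun n => ((n + 1 : ℕ) : ℝ≥0∞) ^ ℓ) x
        = (∫⁻ y in Aᶜ, retE P A (fun n => ((n + 1 : ℕ) : ℝ≥0∞) ^ ℓ) y ∂(P x))
          + P x A
          + ∑ k ∈ Finset.range ℓ, (ℓ.choose k : ℝ≥0∞) * retE P A (fun n => (n : ℝ≥0∞) ^ k) x) ∧
    ((∀ x ∉ A, hitE P A (fun n => ((n + 1 : ℕ) : ℝ≥0∞) ^ ℓ) x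
        = (∫⁻ y in Aᶜ, hitE P A (fun n => ((n + 1 : ℕ) : ℝ≥0∞) ^ ℓ) y ∂(P x))
          + P x A
          + ∑ k ∈ Finset.range ℓ, (ℓ.choose k : ℝ≥0∞) * retE P A (fun n => (n : ℝ≥0∞) ^ k) x) ∧
      (∀ x ∈ A, hitE P A (fun n => ((n + 1 : ℕ) : ℝ≥0∞) ^ ℓ) x = 1)) ∧
    (∀ g : X → ℝ≥0∞, Measurable g →
      ((∀ x ∉ A, g x = (∫⁻ y in Aᶜ, g y ∂(P x)) + P x A
          + ∑ k ∈ Finset.range ℓ, (ℓ.choose k : ℝ≥0∞) * retE P A (fun n => (n : ℝ≥0∞) ^ k) x) ∧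
        (∀ x ∈ A, g x = 1)) →
      ∀ x, hitE P A (fun n => ((n + 1 : ℕ) : ℝ≥0∞) ^ ℓ) x ≤ g x) :=
  minimal_solution_polynomial_moment_general P ψ A hA ℓ

end MarkovTransience
end

section
/- Assume Φ is ψ-irreducible with (possibly sub-stochastic) transition kernel P, and P_x(τ < ∞) = 1 for all x ∈ X. Then the following are equivalent. (1) Φ is uniformly geometric transient, i.e. there exists κ > 1 such that sup_{x∈X} Σ_{n≥1} κ^n P^n(x,X) < ∞. (2) There exists κ > 1 such that sup_{x∈X} E_x[κ^τ] < ∞. (3) There exist a constant λ ∈ (0,1) and a bounded function W ≥ 1 such that PW(x) ≤ λ W(x) for all x ∈ X. (4) There exists n_0 ∈ N such that sup_{x∈X} P^{n_0}(x,X) < 1. (5) sup_{x∈X} E_x[τ] < ∞. -/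
open MeasureTheory ProbabilityTheory
open scoped ENNReal NNReal Classical

namespace MarkovTransience

variable {X : Type*} [MeasurableSpace X]

/-!
All five conditions are uniform controls of the survival probabilities `P^n(x, X) = P_x(τ > n)`.
Bernoulli's inequality `n (κ - 1) ≤ κ^n` gives (2) ⇒ (5), and Markov's inequality
`n P^n(x, X) ≤ E_x[τ]`, valid because `τ < ∞` almost surely, gives (5) ⇒ (4).
If `P^{n₀}(·, X) ≤ λ^{n₀}`, the truncated potential `W = ∑_{j < n₀} λ^{-j} P^j(·, X)` telescopes:
`1 + λ⁻¹ PW = W + λ^{-n₀} P^{n₀}(·, X) ≤ W + 1`, which is the drift condition (3). Iterating the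
drift gives `P^n(·, X) ≤ λ^n W`, hence (1) for every `κ < λ⁻¹`.
-/

section

variable {P : Kernel X X}

lemma iterP_zero_univ (x : X) : iterP P 0 x Set.univ = 1 := by simp [iterP]

lemma measurable_iterP_univ (P : Kernel X X) : ∀ n, Measurable fun x => iterP P n x Set.univ
  | 0 => by simp only [iterP_zero_univ]; exact measurable_const
  | n + 1 => (measurable_iterP_univ P n).lintegral_kernel

lemma iterP_univ_le_one (hP : ∀ x, P x Set.univ ≤ 1) : ∀ n x, iterP P n x Set.univ ≤ 1
  | 0, x => (iterP_zero_univ x).le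
  | n + 1, x => calc
      ∫⁻ y, iterP P n y Set.univ ∂P x ≤ ∫⁻ _, 1 ∂P x :=
        lintegral_mono fun y => iterP_univ_le_one hP n y
      _ ≤ 1 := by rw [lintegral_one]; exact hP x

lemma iterP_succ_univ_le (hP : ∀ x, P x Set.univ ≤ 1) :
    ∀ n x, iterP P (n + 1) x Set.univ ≤ iterP P n x Set.univ
  | 0, x => (iterP_univ_le_one hP 1 x).trans_eq (iterP_zero_univ x).symm
  | n + 1, _ => lintegral_mono fun y => iterP_succ_univ_le hP n y

lemma sum_range_lifeDist_add_iterP (hP : ∀ x, P x Set.univ ≤ 1) (x : X) (N : ℕ) :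
    ∑ i ∈ Finset.range N, lifeDist P x i + iterP P N x Set.univ = 1 := by
  induction N with
  | zero => simp [iterP_zero_univ]
  | succ N ih =>
    rw [Finset.sum_range_succ, add_assoc, lifeDist, tsub_add_cancel_of_le
      (iterP_succ_univ_le hP N x), ih]

lemma iterP_univ_eq_tsum_lifeDist (hP : ∀ x, P x Set.univ ≤ 1) {x : X}
    (hlife : ∑' n, lifeDist P x n = 1) (N : ℕ) :
    iterP P N x Set.univ = ∑' m, lifeDist P x (m + N) := by
  have hsplit := ENNReal.summable.sum_add_tsum_nat_add' (f := lifeDist P x) (k := N)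
  rw [hlife, ← sum_range_lifeDist_add_iterP hP x N] at hsplit
  refine ((ENNReal.add_right_inj ?_).1 hsplit).symm
  exact ne_top_of_le_ne_top ENNReal.one_ne_top
    (le_self_add.trans (sum_range_lifeDist_add_iterP hP x N).le)

lemma lifeE_mono {r s : ℕ → ℝ≥0∞} (h : ∀ n, r n ≤ s n) (x : X) : lifeE P r x ≤ lifeE P s x :=
  ENNReal.tsum_le_tsum fun n => mul_le_mul_left (h n) _

lemma lifeE_const_mul (c : ℝ≥0∞) (r : ℕ → ℝ≥0∞) (x : X) :
    lifeE P (fun n => c * r n) x = c * lifeE P r x := by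
  simp only [lifeE, mul_assoc, ENNReal.tsum_mul_left]

lemma lifeE_le_tsum_mul_iterP (r : ℕ → ℝ≥0∞) (x : X) :
    lifeE P r x ≤ ∑' n, r n * iterP P n x Set.univ :=
  ENNReal.tsum_le_tsum fun _ => mul_le_mul_right tsub_le_self _

lemma lifeE_pow_le (κ : ℝ≥0∞) (x : X) :
    lifeE P (fun n => κ ^ n) x ≤ 1 + ∑' n, κ ^ (n + 1) * iterP P (n + 1) x Set.univ := by
  refine (lifeE_le_tsum_mul_iterP _ x).trans_eq ?_
  rw [tsum_eq_zero_add' ENNReal.summable, pow_zero, one_mul, iterP_zero_univ]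

lemma natCast_mul_iterP_le_lifeE (hP : ∀ x, P x Set.univ ≤ 1) {x : X}
    (hlife : ∑' n, lifeDist P x n = 1) (N : ℕ) :
    N * iterP P N x Set.univ ≤ lifeE P (fun n => n) x := by
  rw [iterP_univ_eq_tsum_lifeDist hP hlife, ← ENNReal.tsum_mul_left, lifeE,
    ← ENNReal.summable.sum_add_tsum_nat_add' (f := fun n => (n : ℝ≥0∞) * lifeDist P x n) (k := N)]
  exact le_add_left (ENNReal.tsum_le_tsum fun m =>
    mul_le_mul_left (by exact_mod_cast Nat.le_add_left N m) _)

lemma natCast_le_inv_sub_one_mul_pow {κ : ℝ≥0∞} (hκ : 1 < κ) (hκ_top : κ ≠ ⊤) (n : ℕ) :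
    (n : ℝ≥0∞) ≤ (κ - 1)⁻¹ * κ ^ n := by
  have hbern : 1 + n * (κ - 1) ≤ κ ^ n := by
    simpa [add_tsub_cancel_of_le hκ.le] using
      one_add_le_pow_of_two_add_nonneg (a := κ - 1) zero_le n
  rw [← ENNReal.div_eq_inv_mul, ENNReal.le_div_iff_mul_le (Or.inl (tsub_pos_of_lt hκ).ne')
    (Or.inl (ENNReal.sub_ne_top hκ_top))]
  exact le_add_self.trans hbern

lemma exists_one_lt_mul_lt_one {lam : ℝ≥0∞} (hlam : lam < 1) :
    ∃ κ : ℝ≥0, 1 < κ ∧ κ * lam < 1 := by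
  obtain ⟨κ, hκ1, hκlam⟩ := ENNReal.lt_iff_exists_nnreal_btwn.1 (ENNReal.one_lt_inv.2 hlam)
  exact ⟨κ, by exact_mod_cast hκ1, ENNReal.mul_lt_of_lt_div (by rwa [one_div])⟩

lemma iterP_univ_le_pow_mul_of_drift {lam : ℝ≥0∞} {W : X → ℝ≥0∞} (hW : Measurable W)
    (hW1 : ∀ x, 1 ≤ W x) (hdrift : ∀ x, act P W x ≤ lam * W x) :
    ∀ n x, iterP P n x Set.univ ≤ lam ^ n * W x
  | 0, x => by simpa [iterP_zero_univ] using hW1 x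
  | n + 1, x => calc
      ∫⁻ y, iterP P n y Set.univ ∂P x ≤ ∫⁻ y, lam ^ n * W y ∂P x :=
        lintegral_mono fun y => iterP_univ_le_pow_mul_of_drift hW hW1 hdrift n y
      _ = lam ^ n * act P W x := lintegral_const_mul _ hW
      _ ≤ lam ^ n * (lam * W x) := mul_le_mul_right (hdrift x) _
      _ = lam ^ (n + 1) * W x := by ring

noncomputable def survivalPotential (P : Kernel X X) (β : ℝ≥0∞) (n : ℕ) (x : X) : ℝ≥0∞ :=
  ∑ j ∈ Finset.range n, β ^ j * iterP P j x Set.univ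

lemma measurable_survivalPotential (β : ℝ≥0∞) (n : ℕ) :
    Measurable (survivalPotential P β n) :=
  Finset.measurable_sum _ fun j _ => (measurable_iterP_univ P j).const_mul _

lemma one_le_survivalPotential (β : ℝ≥0∞) {n : ℕ} (hn : 0 < n) (x : X) :
    1 ≤ survivalPotential P β n x := by
  calc (1 : ℝ≥0∞) = β ^ 0 * iterP P 0 x Set.univ := by simp [iterP_zero_univ]
    _ ≤ survivalPotential P β n x :=
      Finset.single_le_sum (f := fun j => β ^ j * iterP P j x Set.univ)
        (fun _ _ => zero_le) (Finset.mem_range.2 hn)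

lemma survivalPotential_le (hP : ∀ x, P x Set.univ ≤ 1) {β : ℝ≥0∞} (hβ : 1 ≤ β) (n : ℕ)
    (x : X) : survivalPotential P β n x ≤ n * β ^ n := by
  calc survivalPotential P β n x ≤ ∑ _j ∈ Finset.range n, β ^ n :=
        Finset.sum_le_sum fun j hj => calc
          β ^ j * iterP P j x Set.univ ≤ β ^ j * 1 :=
            mul_le_mul_right (iterP_univ_le_one hP j x) _
          _ ≤ β ^ n := by
            rw [mul_one]; exact pow_le_pow_right₀ hβ (Finset.mem_range.1 hj).le
    _ = n * β ^ n := by rw [Finset.sum_const, Finset.card_range, nsmul_eq_mul]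

lemma one_add_mul_act_survivalPotential (β : ℝ≥0∞) (n : ℕ) (x : X) :
    1 + β * act P (survivalPotential P β n) x =
      survivalPotential P β n x + β ^ n * iterP P n x Set.univ := by
  have hact : act P (survivalPotential P β n) x =
      ∑ j ∈ Finset.range n, β ^ j * iterP P (j + 1) x Set.univ := by
    unfold act survivalPotential
    rw [lintegral_finsetSum _ fun j _ => (measurable_iterP_univ P j).const_mul _]
    exact Finset.sum_congr rfl fun j _ => lintegral_const_mul _ (measurable_iterP_univ P j)
  rw [hact, Finset.mul_sum, survivalPotential, ← Finset.sum_range_succ]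
  simp only [Finset.sum_range_succ' _ n, ← mul_assoc, ← pow_succ', pow_zero, one_mul,
    iterP_zero_univ, add_comm]

lemma act_survivalPotential_le {lam : ℝ≥0∞} (hlam0 : lam ≠ 0)
    (hlam1 : lam < 1) {n : ℕ} (h : ∀ x, iterP P n x Set.univ ≤ lam ^ n) (x : X) :
    act P (survivalPotential P lam⁻¹ n) x ≤ lam * survivalPotential P lam⁻¹ n x := by
  have hlam_top : lam ≠ ⊤ := (hlam1.trans ENNReal.one_lt_top).ne
  have htail : lam⁻¹ ^ n * iterP P n x Set.univ ≤ 1 := calc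
    lam⁻¹ ^ n * iterP P n x Set.univ ≤ lam⁻¹ ^ n * lam ^ n := mul_le_mul_right (h x) _
    _ = 1 := by rw [← mul_pow, ENNReal.inv_mul_cancel hlam0 hlam_top, one_pow]
  have hle : lam⁻¹ * act P (survivalPotential P lam⁻¹ n) x ≤ survivalPotential P lam⁻¹ n x := by
    rw [← ENNReal.add_le_add_iff_left ENNReal.one_ne_top,
      one_add_mul_act_survivalPotential, add_comm 1]
    exact add_le_add_right htail _
  calc act P (survivalPotential P lam⁻¹ n) x
      = lam * (lam⁻¹ * act P (survivalPotential P lam⁻¹ n) x) := by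
        rw [← mul_assoc, ENNReal.mul_inv_cancel hlam0 hlam_top, one_mul]
    _ ≤ lam * survivalPotential P lam⁻¹ n x := mul_le_mul_right hle _

lemma iSup_lifeE_pow_le (κ : ℝ≥0∞) :
    ⨆ x, lifeE P (fun n => κ ^ n) x ≤
      1 + ⨆ x, ∑' n, κ ^ (n + 1) * iterP P (n + 1) x Set.univ :=
  iSup_le fun x =>
    (lifeE_pow_le κ x).trans (add_le_add_right (le_iSup_of_le x le_rfl) (1 : ℝ≥0∞))

lemma iSup_lifeE_natCast_le {κ : ℝ≥0∞} (hκ : 1 < κ) (hκ_top : κ ≠ ⊤) :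
    ⨆ x, lifeE P (fun n => n) x ≤ (κ - 1)⁻¹ * ⨆ x, lifeE P (fun n => κ ^ n) x := by
  rw [ENNReal.mul_iSup]
  exact iSup_mono fun x => (lifeE_mono (natCast_le_inv_sub_one_mul_pow hκ hκ_top) x).trans_eq
    (lifeE_const_mul _ _ x)

lemma exists_iSup_iterP_lt_one (hP : ∀ x, P x Set.univ ≤ 1)
    (hlife : ∀ x, ∑' n, lifeDist P x n = 1) (h : ⨆ x, lifeE P (fun n => n) x < ⊤) :
    ∃ n₀ : ℕ, 0 < n₀ ∧ ⨆ x, iterP P n₀ x Set.univ < 1 := by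
  set C := ⨆ x, lifeE P (fun n => n) x
  obtain ⟨N, hN⟩ := ENNReal.exists_nat_gt h.ne
  have hN0 : (N : ℝ≥0∞) ≠ 0 := (zero_le.trans_lt hN).ne'
  refine ⟨N, Nat.pos_of_ne_zero (Nat.cast_ne_zero.1 hN0), ?_⟩
  calc ⨆ x, iterP P N x Set.univ ≤ C / N :=
        iSup_le fun x => (ENNReal.le_div_iff_mul_le (Or.inl hN0) (Or.inl (by simp))).2 <|
          (mul_comm _ _).trans_le ((natCast_mul_iterP_le_lifeE hP (hlife x) N).trans
            (le_iSup_of_le x le_rfl))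
    _ < 1 := by rwa [ENNReal.div_lt_iff (Or.inl hN0) (Or.inl (by simp)), one_mul]

lemma exists_iterP_le_pow_of_iSup_lt_one {n₀ : ℕ} (hn₀ : 0 < n₀)
    (h : ⨆ x, iterP P n₀ x Set.univ < 1) :
    ∃ lam : ℝ≥0∞, 0 < lam ∧ lam < 1 ∧ ∀ x, iterP P n₀ x Set.univ ≤ lam ^ n₀ := by
  -- the floor `2⁻¹` keeps `λ = η ^ (1 / n₀)` positive
  set η := max (⨆ x, iterP P n₀ x Set.univ) 2⁻¹
  have hη1 : η < 1 := max_lt h ENNReal.one_half_lt_one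
  refine ⟨η ^ (n₀⁻¹ : ℝ), ENNReal.rpow_pos (lt_max_of_lt_right (by simp))
    (hη1.trans ENNReal.one_lt_top).ne, ENNReal.rpow_lt_one hη1 (by positivity), fun x => ?_⟩
  rw [ENNReal.rpow_inv_natCast_pow hn₀.ne']
  exact le_max_of_le_left (le_iSup_of_le x le_rfl)

lemma exists_drift_of_iterP_le_pow (hP : ∀ x, P x Set.univ ≤ 1) {n : ℕ} (hn : 0 < n)
    {lam : ℝ≥0∞} (hlam0 : lam ≠ 0) (hlam1 : lam < 1) (h : ∀ x, iterP P n x Set.univ ≤ lam ^ n) :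
    ∃ W : X → ℝ≥0∞, Measurable W ∧ (∀ x, 1 ≤ W x) ∧ (∃ M : ℝ≥0∞, M < ⊤ ∧ ∀ x, W x ≤ M) ∧
      ∀ x, act P W x ≤ lam * W x :=
  ⟨survivalPotential P lam⁻¹ n, measurable_survivalPotential _ _,
    one_le_survivalPotential _ hn, ⟨n * lam⁻¹ ^ n,
      ENNReal.mul_lt_top (ENNReal.natCast_lt_top n)
        (ENNReal.pow_lt_top (ENNReal.inv_lt_top.2 (pos_iff_ne_zero.2 hlam0))),
      survivalPotential_le hP (ENNReal.one_le_inv.2 hlam1.le) n⟩,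
    act_survivalPotential_le hlam0 hlam1 h⟩

lemma exists_iSup_tsum_pow_mul_iterP_lt_top_of_drift {lam : ℝ≥0∞} (hlam : lam < 1)
    {W : X → ℝ≥0∞} (hW : Measurable W) (hW1 : ∀ x, 1 ≤ W x) {M : ℝ≥0∞} (hM : M < ⊤)
    (hWM : ∀ x, W x ≤ M) (hdrift : ∀ x, act P W x ≤ lam * W x) :
    ∃ κ : ℝ≥0, 1 < κ ∧
      ⨆ x, ∑' n, (κ : ℝ≥0∞) ^ (n + 1) * iterP P (n + 1) x Set.univ < ⊤ := by
  obtain ⟨κ, hκ1, hκlam⟩ := exists_one_lt_mul_lt_one hlam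
  refine ⟨κ, hκ1, (iSup_le fun x => ?_).trans_lt (ENNReal.mul_lt_top hM
    (ENNReal.tsum_geometric _ ▸ ENNReal.inv_lt_top.2 (tsub_pos_of_lt hκlam)))⟩
  calc ∑' n, (κ : ℝ≥0∞) ^ (n + 1) * iterP P (n + 1) x Set.univ
      ≤ ∑' n, M * (κ * lam) ^ n := ENNReal.tsum_le_tsum fun n => calc
        (κ : ℝ≥0∞) ^ (n + 1) * iterP P (n + 1) x Set.univ
            ≤ (κ : ℝ≥0∞) ^ (n + 1) * (lam ^ (n + 1) * M) := mul_le_mul_right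
              ((iterP_univ_le_pow_mul_of_drift hW hW1 hdrift (n + 1) x).trans
                (mul_le_mul_right (hWM x) _)) _
        _ = M * (κ * lam) ^ (n + 1) := by ring
        _ ≤ M * (κ * lam) ^ n := mul_le_mul_right
              (pow_le_pow_of_le_one zero_le hκlam.le n.le_succ) _
    _ = M * ∑' n, ((κ : ℝ≥0∞) * lam) ^ n := ENNReal.tsum_mul_left

end

theorem uniformlyGeomTransient_tfae_general
    {X : Type*} [MeasurableSpace X]
    (P : Kernel X X) (hP : ∀ x, P x Set.univ ≤ 1)
    (hlife : ∀ x, (∑' n, lifeDist P x n) = 1) :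
    [(∃ κ : ℝ≥0, 1 < κ ∧
        (⨆ x, ∑' n, (κ : ℝ≥0∞) ^ (n + 1) * iterP P (n + 1) x Set.univ) < ⊤),
     (∃ κ : ℝ≥0, 1 < κ ∧ (⨆ x, lifeE P (fun n => (κ : ℝ≥0∞) ^ n) x) < ⊤),
     (∃ lam : ℝ≥0∞, 0 < lam ∧ lam < 1 ∧ ∃ W : X → ℝ≥0∞, Measurable W ∧
        (∀ x, 1 ≤ W x) ∧ (∃ M : ℝ≥0∞, M < ⊤ ∧ ∀ x, W x ≤ M) ∧
        ∀ x, act P W x ≤ lam * W x),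
     (∃ n₀ : ℕ, 0 < n₀ ∧ (⨆ x, iterP P n₀ x Set.univ) < 1),
     ((⨆ x, lifeE P (fun n => (n : ℝ≥0∞)) x) < ⊤)].TFAE := by
  tfae_have 1 → 2 := fun ⟨κ, hκ, hC⟩ =>
    ⟨κ, hκ, (iSup_lifeE_pow_le κ).trans_lt (ENNReal.add_lt_top.2 ⟨ENNReal.one_lt_top, hC⟩)⟩
  tfae_have 2 → 5 := fun ⟨κ, hκ, hC⟩ =>
    (iSup_lifeE_natCast_le (by exact_mod_cast hκ) ENNReal.coe_ne_top).trans_lt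
      (ENNReal.mul_lt_top (ENNReal.inv_lt_top.2 (tsub_pos_of_lt (by exact_mod_cast hκ))) hC)
  tfae_have 5 → 4 := exists_iSup_iterP_lt_one hP hlife
  tfae_have 4 → 3 := fun ⟨n₀, hn₀, h⟩ => by
    obtain ⟨lam, hlam0, hlam1, hle⟩ := exists_iterP_le_pow_of_iSup_lt_one hn₀ h
    exact ⟨lam, hlam0, hlam1, exists_drift_of_iterP_le_pow hP hn₀ hlam0.ne' hlam1 hle⟩
  tfae_have 3 → 1 := fun ⟨lam, _, hlam1, W, hW, hW1, ⟨M, hM, hWM⟩, hdrift⟩ =>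
    exists_iSup_tsum_pow_mul_iterP_lt_top_of_drift hlam1 hW hW1 hM hWM hdrift
  tfae_finish

theorem uniformlyGeomTransient_tfae
    {X : Type*} [MeasurableSpace X] [MeasurableSpace.CountablyGenerated X]
    (P : Kernel X X) (hP : ∀ x, P x Set.univ ≤ 1) (ψ : Measure X)
    (hψ : IsIrreducibility P ψ) (hlife : ∀ x, (∑' n, lifeDist P x n) = 1) :
    [(∃ κ : ℝ≥0, 1 < κ ∧
        (⨆ x, ∑' n, (κ : ℝ≥0∞) ^ (n + 1) * iterP P (n + 1) x Set.univ) < ⊤),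
     (∃ κ : ℝ≥0, 1 < κ ∧ (⨆ x, lifeE P (fun n => (κ : ℝ≥0∞) ^ n) x) < ⊤),
     (∃ lam : ℝ≥0∞, 0 < lam ∧ lam < 1 ∧ ∃ W : X → ℝ≥0∞, Measurable W ∧
        (∀ x, 1 ≤ W x) ∧ (∃ M : ℝ≥0∞, M < ⊤ ∧ ∀ x, W x ≤ M) ∧
        ∀ x, act P W x ≤ lam * W x),
     (∃ n₀ : ℕ, 0 < n₀ ∧ (⨆ x, iterP P n₀ x Set.univ) < 1),
     ((⨆ x, lifeE P (fun n => (n : ℝ≥0∞)) x) < ⊤)].TFAE :=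
  uniformlyGeomTransient_tfae_general P hP hlife

end MarkovTransience
end

section
/- Let A ∈ B+(X) and let ℓ ≥ 1 be an integer. Suppose that sup_{x∈A} L(x,A) < 1 and sup_{x∈A} Σ_{n≥1} n^ℓ F^n(x,A) < ∞. Then sup_{x∈A} Σ_{n≥1} n^ℓ P^n(x,A) < ∞. -/
open MeasureTheory ProbabilityTheory
open scoped ENNReal NNReal Classical

namespace MarkovTransience

variable {X : Type*} [MeasurableSpace X]

/-!
Split `P^n(x, A)` according to the first entrance time `k` into `A`:
`P^n(x, A) = ∑_{k ≤ n} ∫_A P^{n-k}(y, A) F^k(x, dy)`. Expanding `n^i = (k + (n - k))^i`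
binomially, the truncated moments `U_i(N) = sup_{y ∈ A} ∑_{m < N} m^i P^m(y, A)` satisfy
`U_i ≤ 1 + δ U_i + ∑_{j < i} (i choose j) U_j M`, with `δ = sup_A L(·, A) < 1` bounding the term
`j = i` and `M = sup_A ∑ n^ℓ F^n(·, A)` the others. Truncation makes `U_i(N)` finite, so
`U_i(N) ≤ (1 + ∑_{j < i} (i choose j) U_j M) / (1 - δ)` uniformly in `N`, and induction on `i ≤ ℓ`
concludes.
-/

variable {P : Kernel X X} {A : Set X}

lemma measurable_iterP {B : Set X} (hB : MeasurableSet B) :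
    ∀ n, Measurable fun x => iterP P n x B
  | 0 => measurable_const.indicator hB
  | n + 1 => (measurable_iterP hB n).lintegral_kernel

lemma iterP_zero_le_one (x : X) : iterP P 0 x A ≤ 1 :=
  show A.indicator 1 x ≤ 1 from Set.indicator_le (fun _ _ => le_rfl) x

lemma iterP_le_one (hP : ∀ x, P x Set.univ ≤ 1) : ∀ n x, iterP P n x A ≤ 1
  | 0, x => iterP_zero_le_one x
  | n + 1, x =>
    calc ∫⁻ y, iterP P n y A ∂(P x) ≤ ∫⁻ _, 1 ∂(P x) := lintegral_mono (iterP_le_one hP n)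
      _ ≤ 1 := by rw [lintegral_one]; exact hP x

/-- `firstEntrance P hA k x B = P_x(τ_A = k + 1, Φ_{k+1} ∈ B)`. -/
noncomputable def firstEntrance (P : Kernel X X) (hA : MeasurableSet A) : ℕ → Kernel X X
  | 0 => P.restrict hA
  | k + 1 => firstEntrance P hA k ∘ₖ P.restrict hA.compl

section FirstEntrance

variable (hA : MeasurableSet A)

lemma firstEntrance_apply_univ : ∀ k x, firstEntrance P hA k x Set.univ = retF P A (k + 1) x
  | 0, x => by simp [firstEntrance, retF, Kernel.restrict_apply]
  | k + 1, x => by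
    rw [firstEntrance, Kernel.comp_apply' _ _ _ MeasurableSet.univ, Kernel.restrict_apply]
    simp_rw [firstEntrance_apply_univ k]
    rfl

lemma firstEntrance_apply_compl : ∀ k x, firstEntrance P hA k x Aᶜ = 0
  | 0, x => by simp [firstEntrance, Kernel.restrict_apply' _ _ _ hA.compl]
  | k + 1, x => by
    simp [firstEntrance, Kernel.comp_apply' _ _ _ hA.compl, firstEntrance_apply_compl k]

lemma lintegral_firstEntrance_le {W : X → ℝ≥0∞} {c : ℝ≥0∞} (hW : ∀ y ∈ A, W y ≤ c)
    (k : ℕ) (x : X) : ∫⁻ y, W y ∂firstEntrance P hA k x ≤ c * retF P A (k + 1) x := by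
  have hmem : ∀ᵐ y ∂firstEntrance P hA k x, y ∈ A := by
    simpa using (measure_eq_zero_iff_ae_notMem.mp (firstEntrance_apply_compl hA k x))
  calc ∫⁻ y, W y ∂firstEntrance P hA k x ≤ ∫⁻ _, c ∂firstEntrance P hA k x :=
        lintegral_mono_ae (hmem.mono hW)
    _ = c * retF P A (k + 1) x := by rw [lintegral_const, firstEntrance_apply_univ]

lemma iterP_succ_eq_sum_firstEntrance : ∀ n x,
    iterP P (n + 1) x A = ∑ k ∈ Finset.range (n + 1),
      ∫⁻ y, iterP P (n - k) y A ∂firstEntrance P hA k x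
  | 0, x => by
    simp [iterP, firstEntrance, Kernel.restrict_apply, lintegral_indicator hA]
  | n + 1, x => by
    have hcompl : ∫⁻ y in Aᶜ, iterP P (n + 1) y A ∂(P x) = ∑ k ∈ Finset.range (n + 1),
        ∫⁻ y, iterP P (n - k) y A ∂firstEntrance P hA (k + 1) x := by
      simp_rw [iterP_succ_eq_sum_firstEntrance n, firstEntrance,
        Kernel.lintegral_comp _ _ _ (measurable_iterP hA _), Kernel.restrict_apply]
      exact lintegral_finsetSum' _ fun k _ =>
        (measurable_iterP hA _).lintegral_kernel.aemeasurable
    rw [show iterP P (n + 2) x A = ∫⁻ y, iterP P (n + 1) y A ∂(P x) from rfl,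
      ← lintegral_add_compl _ hA, hcompl, add_comm, Finset.sum_range_succ'
        (fun k => ∫⁻ y, iterP P (n + 1 - k) y A ∂firstEntrance P hA k x)]
    simp only [Nat.add_sub_add_right, Nat.sub_zero]
    rfl

end FirstEntrance

lemma _root_.ENNReal.le_div_one_sub_of_le_mul_add {a b δ : ℝ≥0∞} (ha : a ≠ ⊤) (hδ : δ < 1)
    (h : a ≤ δ * a + b) : a ≤ b / (1 - δ) := by
  rw [ENNReal.le_div_iff_mul_le (Or.inl (tsub_pos_of_lt hδ).ne') (Or.inl (by simp)),
    ENNReal.mul_sub fun _ _ => ha, mul_one, tsub_le_iff_right, mul_comm]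
  exact h.trans_eq (add_comm _ _)

noncomputable def occupationMoment (P : Kernel X X) (A : Set X) (i N : ℕ) (x : X) : ℝ≥0∞ :=
  ∑ m ∈ Finset.range N, (m : ℝ≥0∞) ^ i * iterP P m x A

noncomputable def supOccupationMoment (P : Kernel X X) (A : Set X) (i N : ℕ) : ℝ≥0∞ :=
  ⨆ x ∈ A, occupationMoment P A i N x

lemma supOccupationMoment_mono (i : ℕ) : Monotone (supOccupationMoment P A i) :=
  fun _ _ hNN' => iSup₂_mono fun _ _ => Finset.sum_le_sum_of_subset
    (Finset.range_subset_range.mpr hNN')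

lemma supOccupationMoment_ne_top (hP : ∀ x, P x Set.univ ≤ 1) (i N : ℕ) :
    supOccupationMoment P A i N ≠ ⊤ := by
  refine ne_top_of_le_ne_top (b := ∑ m ∈ Finset.range N, (m : ℝ≥0∞) ^ i) ?_
    (iSup₂_le fun x _ => Finset.sum_le_sum fun m _ => ?_)
  · exact ENNReal.sum_ne_top.mpr fun m _ => by simp
  · exact mul_le_of_le_one_right' (iterP_le_one hP m x)

lemma sum_range_add_pow_mul_iterP (i N k : ℕ) (y : X) :
    ∑ m ∈ Finset.range N, ((k + m : ℕ) : ℝ≥0∞) ^ i * iterP P m y A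
      = ∑ j ∈ Finset.range (i + 1),
          (i.choose j : ℝ≥0∞) * (k : ℝ≥0∞) ^ (i - j) * occupationMoment P A j N y := by
  simp_rw [Nat.cast_add, add_comm (k : ℝ≥0∞), add_pow, Finset.sum_mul, occupationMoment,
    Finset.mul_sum]
  rw [Finset.sum_comm]
  exact Finset.sum_congr rfl fun j _ => Finset.sum_congr rfl fun m _ => by ring

lemma occupationMoment_succ_le (hA : MeasurableSet A) (i N : ℕ) (x : X) :
    occupationMoment P A i (N + 1) x ≤ 1 + ∑ j ∈ Finset.range (i + 1),
      (i.choose j : ℝ≥0∞) * supOccupationMoment P A j N *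
        ∑ k ∈ Finset.range N, ((k + 1 : ℕ) : ℝ≥0∞) ^ (i - j) * retF P A (k + 1) x := by
  rw [occupationMoment, Finset.sum_range_succ', add_comm]
  gcongr
  · exact mul_le_one' (pow_le_one₀ zero_le (by simp)) (iterP_zero_le_one x)
  calc ∑ n ∈ Finset.range N, ((n + 1 : ℕ) : ℝ≥0∞) ^ i * iterP P (n + 1) x A
      = ∑ n ∈ Finset.range N, ∑ k ∈ Finset.range (n + 1), ((k + 1 + (n - k) : ℕ) : ℝ≥0∞) ^ i *
          ∫⁻ y, iterP P (n - k) y A ∂firstEntrance P hA k x := by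
        refine Finset.sum_congr rfl fun n _ => ?_
        rw [iterP_succ_eq_sum_firstEntrance hA, Finset.mul_sum]
        refine Finset.sum_congr rfl fun k hk => ?_
        rw [Nat.add_right_comm, Nat.add_sub_cancel' (Nat.lt_succ_iff.mp (Finset.mem_range.mp hk))]
    _ = ∑ k ∈ Finset.range N, ∑ m ∈ Finset.range (N - k), ((k + 1 + m : ℕ) : ℝ≥0∞) ^ i *
          ∫⁻ y, iterP P m y A ∂firstEntrance P hA k x :=
        Finset.sum_range_diag_flip N fun k m => ((k + 1 + m : ℕ) : ℝ≥0∞) ^ i *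
          ∫⁻ y, iterP P m y A ∂firstEntrance P hA k x
    _ ≤ ∑ k ∈ Finset.range N, ∑ m ∈ Finset.range N, ((k + 1 + m : ℕ) : ℝ≥0∞) ^ i *
          ∫⁻ y, iterP P m y A ∂firstEntrance P hA k x :=
        Finset.sum_le_sum fun k _ =>
          Finset.sum_le_sum_of_subset (Finset.range_subset_range.mpr (N.sub_le k))
    _ = ∑ k ∈ Finset.range N, ∫⁻ y, ∑ j ∈ Finset.range (i + 1), (i.choose j : ℝ≥0∞) *
          ((k + 1 : ℕ) : ℝ≥0∞) ^ (i - j) * occupationMoment P A j N y ∂firstEntrance P hA k x := by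
        refine Finset.sum_congr rfl fun k _ => ?_
        simp_rw [← sum_range_add_pow_mul_iterP, ← lintegral_const_mul _ (measurable_iterP hA _)]
        exact (lintegral_finsetSum' _ fun m _ =>
          ((measurable_iterP hA m).const_mul _).aemeasurable).symm
    _ ≤ ∑ k ∈ Finset.range N, (∑ j ∈ Finset.range (i + 1), (i.choose j : ℝ≥0∞) *
          ((k + 1 : ℕ) : ℝ≥0∞) ^ (i - j) * supOccupationMoment P A j N) * retF P A (k + 1) x :=
        Finset.sum_le_sum fun k _ => lintegral_firstEntrance_le hA (fun y hy =>
          Finset.sum_le_sum fun j _ => mul_le_mul_right (le_biSup _ hy) _) k x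
    _ = _ := by
        simp_rw [Finset.sum_mul, Finset.mul_sum]
        rw [Finset.sum_comm]
        exact Finset.sum_congr rfl fun j _ => Finset.sum_congr rfl fun k _ => by ring

section Renewal

variable (hA : MeasurableSet A) {ℓ : ℕ} {δ M : ℝ≥0∞}
  (hL : ∀ x ∈ A, ∑' n, retF P A (n + 1) x ≤ δ)
  (hF : ∀ x ∈ A, ∑' n, ((n + 1 : ℕ) : ℝ≥0∞) ^ ℓ * retF P A (n + 1) x ≤ M)
include hA hL hF

lemma supOccupationMoment_le_renewal {i : ℕ} (hi : i ≤ ℓ) (N : ℕ) :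
    supOccupationMoment P A i N ≤ δ * supOccupationMoment P A i N +
      (1 + ∑ j ∈ Finset.range i, (i.choose j : ℝ≥0∞) * supOccupationMoment P A j N * M) := by
  rcases N with _ | N
  · simp [supOccupationMoment, occupationMoment]
  refine iSup₂_le fun x hx => (occupationMoment_succ_le hA i N x).trans ?_
  have hpartial (r : ℕ) : ∑ k ∈ Finset.range N, ((k + 1 : ℕ) : ℝ≥0∞) ^ r * retF P A (k + 1) x
      ≤ ∑' k, ((k + 1 : ℕ) : ℝ≥0∞) ^ r * retF P A (k + 1) x := ENNReal.sum_le_tsum _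
  have hmoment (j : ℕ) (hj : j < i) :
      ∑ k ∈ Finset.range N, ((k + 1 : ℕ) : ℝ≥0∞) ^ (i - j) * retF P A (k + 1) x ≤ M :=
    (Finset.sum_le_sum fun k _ => mul_le_mul_left (pow_le_pow_right₀ (by simp) (by omega)) _
      ).trans ((hpartial ℓ).trans (hF x hx))
  have hreturn : ∑ k ∈ Finset.range N, ((k + 1 : ℕ) : ℝ≥0∞) ^ (i - i) * retF P A (k + 1) x ≤ δ := by
    simpa using (hpartial 0).trans (by simpa using hL x hx)
  have hmono (j : ℕ) := supOccupationMoment_mono (P := P) (A := A) j N.le_succ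
  have hdiag : (i.choose i : ℝ≥0∞) * supOccupationMoment P A i N *
      ∑ k ∈ Finset.range N, ((k + 1 : ℕ) : ℝ≥0∞) ^ (i - i) * retF P A (k + 1) x
        ≤ δ * supOccupationMoment P A i (N + 1) := by
    rw [Nat.choose_self, Nat.cast_one, one_mul, mul_comm]
    exact mul_le_mul' hreturn (hmono i)
  have hoff : ∑ j ∈ Finset.range i, (i.choose j : ℝ≥0∞) * supOccupationMoment P A j N *
        ∑ k ∈ Finset.range N, ((k + 1 : ℕ) : ℝ≥0∞) ^ (i - j) * retF P A (k + 1) x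
      ≤ ∑ j ∈ Finset.range i, (i.choose j : ℝ≥0∞) * supOccupationMoment P A j (N + 1) * M := by
    gcongr with j hj
    · exact hmono j
    · exact hmoment j (Finset.mem_range.mp hj)
  rw [Finset.sum_range_succ]
  exact (add_le_add le_rfl (add_le_add hoff hdiag)).trans_eq (by ring)

lemma iSup_supOccupationMoment_ne_top (hP : ∀ x, P x Set.univ ≤ 1) (hδ : δ < 1) (hM : M ≠ ⊤) :
    ∀ i ≤ ℓ, ⨆ N, supOccupationMoment P A i N ≠ ⊤ := by
  intro i
  induction i using Nat.strong_induction_on with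
  | _ i ih =>
    intro hi
    set K := 1 + ∑ j ∈ Finset.range i, (i.choose j : ℝ≥0∞) * (⨆ N, supOccupationMoment P A j N) * M
      with hKdef
    have hK : K ≠ ⊤ := ENNReal.add_ne_top.mpr ⟨ENNReal.one_ne_top, ENNReal.sum_ne_top.mpr
      fun j hj => ENNReal.mul_ne_top (ENNReal.mul_ne_top (by simp)
        (ih j (Finset.mem_range.mp hj) (by grind))) hM⟩
    have hbound (N : ℕ) : supOccupationMoment P A i N ≤ K / (1 - δ) := by
      refine ENNReal.le_div_one_sub_of_le_mul_add (supOccupationMoment_ne_top hP i N) hδ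
        ((supOccupationMoment_le_renewal hA hL hF hi N).trans ?_)
      rw [hKdef]
      gcongr with j
      exact le_iSup (supOccupationMoment P A j) N
    exact ne_top_of_le_ne_top (ENNReal.div_ne_top hK (tsub_pos_of_lt hδ).ne') (iSup_le hbound)

end Renewal

lemma tsum_pow_mul_iterP_succ_le_iSup {x : X} (hx : x ∈ A) (ℓ : ℕ) :
    ∑' n, ((n + 1 : ℕ) : ℝ≥0∞) ^ ℓ * iterP P (n + 1) x A ≤ ⨆ N, supOccupationMoment P A ℓ N :=
  calc ∑' n, ((n + 1 : ℕ) : ℝ≥0∞) ^ ℓ * iterP P (n + 1) x A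
      ≤ ∑' m : ℕ, (m : ℝ≥0∞) ^ ℓ * iterP P m x A :=
        ENNReal.tsum_comp_le_tsum_of_injective (add_left_injective 1)
          fun m : ℕ => (m : ℝ≥0∞) ^ ℓ * iterP P m x A
    _ = ⨆ N, occupationMoment P A ℓ N x := ENNReal.tsum_eq_iSup_nat
    _ ≤ ⨆ N, supOccupationMoment P A ℓ N := iSup_mono fun _ => le_biSup _ hx

theorem polynomial_return_sum_lt_top_of_first_return_general
    {X : Type*} [MeasurableSpace X]
    (P : Kernel X X) (hP : ∀ x, P x Set.univ ≤ 1) (ψ : Measure X)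
    (A : Set X) (hA : InBPlus ψ A) (ℓ : ℕ)
    (hL : (⨆ x ∈ A, retL P A x) < 1)
    (hF : (⨆ x ∈ A, ∑' n, ((n + 1 : ℕ) : ℝ≥0∞) ^ ℓ * retF P A (n + 1) x) < ⊤) :
    (⨆ x ∈ A, ∑' n, ((n + 1 : ℕ) : ℝ≥0∞) ^ ℓ * iterP P (n + 1) x A) < ⊤ := by
  have hL' (x : X) (hx : x ∈ A) : ∑' n, retF P A (n + 1) x ≤ ⨆ x ∈ A, retL P A x :=
    (ENNReal.tsum_comp_le_tsum_of_injective (add_left_injective 1) _).trans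
      (le_biSup (retL P A) hx)
  have hF' (x : X) (hx : x ∈ A) := le_biSup
    (fun x => ∑' n, ((n + 1 : ℕ) : ℝ≥0∞) ^ ℓ * retF P A (n + 1) x) hx
  have hbounded := iSup_supOccupationMoment_ne_top hA.1 hL' hF' hP hL hF.ne ℓ le_rfl
  exact (iSup₂_le fun x hx => tsum_pow_mul_iterP_succ_le_iSup hx ℓ).trans_lt hbounded.lt_top

theorem polynomial_return_sum_lt_top_of_first_return
    {X : Type*} [MeasurableSpace X] [MeasurableSpace.CountablyGenerated X]
    (P : Kernel X X) (hP : ∀ x, P x Set.univ ≤ 1) (ψ : Measure X)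
    (hψ : IsMaxIrreducibility P ψ) (A : Set X) (hA : InBPlus ψ A) (ℓ : ℕ) (hℓ : 1 ≤ ℓ)
    (hL : (⨆ x ∈ A, retL P A x) < 1)
    (hF : (⨆ x ∈ A, ∑' n, ((n + 1 : ℕ) : ℝ≥0∞) ^ ℓ * retF P A (n + 1) x) < ⊤) :
    (⨆ x ∈ A, ∑' n, ((n + 1 : ℕ) : ℝ≥0∞) ^ ℓ * iterP P (n + 1) x A) < ⊤ :=
  polynomial_return_sum_lt_top_of_first_return_general P hP ψ A hA ℓ hL hF

end MarkovTransience
end
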